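/- arXiv:2311.11805 — 4 statements merged into one kernel-verified Lean document; each statement's English description precedes it below -/
import Mathlib

section
/- For every positive integer d, the deformed Eulerian polynomial satisfies F_d(x,1) = A_d(x), where A_d is the d-th Eulerian polynomial. -/
open MvPolynomial

/-- The Eulerian polynomials. -/
noncomputable def eulerPoly : ℕ → Polynomial ℝ
  | 0 => 1
  | n + 1 => (1 + Polynomial.C (n : ℝ) * Polynomial.X) * eulerPoly n +
      Polynomial.X * (1 - Polynomial.X) * Polynomial.derivative (eulerPoly n)

/-- Evaluation at `y = 1`, as an algebra hom to single-variable polynomials. -/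
noncomputable def phi : MvPolynomial (Fin 2) ℝ →ₐ[ℝ] Polynomial ℝ :=
  aeval (fun i : Fin 2 => if i = 0 then Polynomial.X else 1)

/-- The substitution `x ↦ x y`, `y ↦ y`. -/
noncomputable def psi : MvPolynomial (Fin 2) ℝ →ₐ[ℝ] MvPolynomial (Fin 2) ℝ :=
  aeval (fun i : Fin 2 => if i = 0 then X 0 * X 1 else X 1)

@[simp] lemma phi_X0 : phi (X 0) = Polynomial.X := by simp [phi]
@[simp] lemma phi_X1 : phi (X 1) = 1 := by simp [phi]
@[simp] lemma psi_X0 : psi (X 0) = X 0 * X 1 := by simp [psi]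
@[simp] lemma psi_X1 : psi (X 1) = X 1 := by simp [psi]

lemma eval_phi (p : MvPolynomial (Fin 2) ℝ) (x : ℝ) :
    eval (fun i : Fin 2 => if i = 0 then x else 1) p = (phi p).eval x := by
  induction p using MvPolynomial.induction_on with
  | C a => simp [phi]
  | add p q hp hq => simp [hp, hq]
  | mul_X p i hp =>
    fin_cases i <;> simp [hp, phi]

lemma phi_pderiv0 (p : MvPolynomial (Fin 2) ℝ) :
    phi (pderiv 0 p) = Polynomial.derivative (phi p) := by
  induction p using MvPolynomial.induction_on with
  | C a => simp [pderiv_C, phi]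
  | add p q hp hq => simp [hp, hq]
  | mul_X p i hp =>
    fin_cases i <;> simp only [Fin.mk_zero, Fin.mk_one] <;>
      simp only [pderiv_mul, map_add, map_mul, hp, phi_X0, phi_X1,
        pderiv_X_self, pderiv_X_of_ne (by decide : (0:Fin 2) ≠ 1),
        pderiv_X_of_ne (by decide : (1:Fin 2) ≠ 0), map_one, map_zero,
        Polynomial.derivative_mul, Polynomial.derivative_X, mul_one, mul_zero, add_zero] <;>
      ring

lemma phi_psi (p : MvPolynomial (Fin 2) ℝ) : phi (psi p) = phi p := by
  induction p using MvPolynomial.induction_on with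
  | C a => simp [psi, phi]
  | add p q hp hq => simp [hp, hq]
  | mul_X p i hp =>
    fin_cases i <;> simp only [Fin.mk_zero, Fin.mk_one, map_mul, psi_X0, psi_X1, hp,
      phi_X0, phi_X1, mul_one]

lemma phi_pderiv1_psi (p : MvPolynomial (Fin 2) ℝ) :
    phi (pderiv 1 (psi p)) =
      Polynomial.X * Polynomial.derivative (phi p) + phi (pderiv 1 p) := by
  induction p using MvPolynomial.induction_on with
  | C a => simp [psi, phi, pderiv_C]
  | add p q hp hq => simp only [map_add, hp, hq, Polynomial.derivative_add]; ring
  | mul_X p i hp =>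
    fin_cases i <;> simp only [Fin.mk_zero, Fin.mk_one] <;>
      simp only [map_mul, psi_X0, psi_X1, pderiv_mul, map_add, hp, phi_psi, phi_pderiv0,
        pderiv_X_self, pderiv_X_of_ne (by decide : (0:Fin 2) ≠ 1),
        pderiv_X_of_ne (by decide : (1:Fin 2) ≠ 0), map_one, map_zero,
        phi_X0, phi_X1, Polynomial.derivative_mul, Polynomial.derivative_X,
        mul_one, mul_zero, add_zero, zero_mul, zero_add, one_mul] <;>
      ring

/-- If `F d` are the deformed Eulerian polynomials, i.e. `F 1 = 1` and
`(1-y) F_d(x,y) = (1 - x y^d) F_{d-1}(x,y) - y(1-x) F_{d-1}(xy,y)` for `d ≥ 2`,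
then `F_d(x,1) = A_d(x)`. -/
theorem deformed_eval_y_one (F : ℕ → MvPolynomial (Fin 2) ℝ)
    (hF1 : F 1 = 1)
    (hFrec : ∀ d : ℕ, 2 ≤ d →
      (1 - X 1) * F d =
        (1 - X 0 * X 1 ^ d) * F (d - 1) -
          X 1 * (1 - X 0) *
            (aeval (fun i : Fin 2 => if i = 0 then X 0 * X 1 else X 1) (F (d - 1))))
    (d : ℕ) (hd : 1 ≤ d) (x : ℝ) :
    eval (fun i : Fin 2 => if i = 0 then x else 1) (F d) = (eulerPoly d).eval x := by
  suffices h : phi (F d) = eulerPoly d by rw [eval_phi, h]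
  induction d with
  | zero => omega
  | succ n ih =>
    rcases Nat.eq_or_lt_of_le hd with h1 | h1
    · have : n = 0 := by omega
      subst this
      simp [hF1, eulerPoly]
    · have hn : 1 ≤ n := by omega
      have ihn := ih hn
      have key := congrArg (fun p => phi (pderiv 1 p)) (hFrec (n+1) (by omega))
      simp only [Nat.add_sub_cancel] at key
      rw [show (aeval (fun i : Fin 2 => if i = 0 then X 0 * X 1 else X 1) (F n)) =
        psi (F n) from rfl] at key
      simp only [pderiv_mul, map_sub, map_add, map_mul, map_one, pderiv_one,
        pderiv_pow, map_neg, Nat.add_sub_cancel, pderiv_X_self,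
        pderiv_X_of_ne (by decide : (0:Fin 2) ≠ 1),
        phi_X0, phi_X1, phi_psi, phi_pderiv1_psi, phi_pderiv0,
        one_pow, mul_one, mul_zero, zero_mul, zero_sub, zero_add, add_zero, sub_zero,
        map_natCast, map_pow, map_ofNat] at key
      rw [show eulerPoly (n+1) = (1 + Polynomial.C (n : ℝ) * Polynomial.X) * eulerPoly n +
        Polynomial.X * (1 - Polynomial.X) * Polynomial.derivative (eulerPoly n) from rfl, ← ihn]
      rw [Polynomial.C_eq_natCast]
      push_cast at key ⊢
      linear_combination -key
end

section
/- For every positive integer d, the deformed Eulerian polynomial F_d satisfies the partial differential equation ∂F_d/∂y (x,1) = (d x / 2) · ∂F_d/∂x (x,1). -/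
/-!
Write `x = X 0`, `y = X 1` and `f̄ = f(x, 1)`. Differentiating the recurrence for `F_{n+1}` once in
`y` and setting `y = 1` gives the Eulerian recursion
`F̄_{n+1} = ((n+1)x + 1 - x) F̄_n + x(1-x) ∂ₓF̄_n`; differentiating it twice expresses
`2 (∂_y F_{n+1})‾` through the partial derivatives of `F_n` of order at most two at `y = 1`.
Since `f ↦ f̄` commutes with `∂ₓ`, the induction hypothesis `2 (∂_y F_n)‾ = n x (∂ₓF_n)‾` may
be differentiated in `x`, and with both identities the second expression becomes `(n+1) x` times
the `x`-derivative of the first.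
-/

open MvPolynomial

namespace MvPolynomial

variable {R σ τ : Type*} [CommRing R]

theorem pderiv_aeval [Fintype σ] (f : σ → MvPolynomial τ R) (i : τ) (p : MvPolynomial σ R) :
    pderiv i (aeval f p) = ∑ j, aeval f (pderiv j p) * pderiv i (f j) := by
  classical
  induction p using MvPolynomial.induction_on with
  | C a => simp
  | add p q hp hq => simp only [map_add, hp, hq, add_mul, Finset.sum_add_distrib]
  | mul_X p n hp =>
    simp only [pderiv_mul, map_add, map_mul, add_mul, Finset.sum_add_distrib, hp, aeval_X,
      pderiv_X, Pi.single_apply, mul_ite, mul_one, mul_zero, apply_ite (aeval f), map_zero,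
      ite_mul, zero_mul, Finset.sum_ite_eq, Finset.mem_univ, if_true, Finset.sum_mul]
    congr 1
    exact Finset.sum_congr rfl fun _ _ => by ring

theorem pderiv_pderiv_comm (i j : σ) (p : MvPolynomial σ R) :
    pderiv i (pderiv j p) = pderiv j (pderiv i p) := by
  classical
  induction p using MvPolynomial.induction_on' with
  | add p q hp hq => simp only [map_add, hp, hq]
  | monomial s a =>
    rcases eq_or_ne i j with rfl | hne
    · rfl
    simp only [pderiv_monomial]
    congr 1
    · rw [tsub_right_comm]
    · simp only [Finsupp.tsub_apply, Finsupp.single_apply, if_neg hne, if_neg hne.symm,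
        Nat.sub_zero]
      ring

end MvPolynomial

namespace DeformedEulerian

variable {R : Type*} [CommRing R]

noncomputable def scaleX : MvPolynomial (Fin 2) R →ₐ[R] MvPolynomial (Fin 2) R :=
  aeval fun i => if i = 0 then X 0 * X 1 else X 1

noncomputable def setYOne : MvPolynomial (Fin 2) R →ₐ[R] MvPolynomial (Fin 2) R :=
  aeval fun i => if i = 0 then X 0 else 1

@[simp] lemma setYOne_X_zero : setYOne (X 0 : MvPolynomial (Fin 2) R) = X 0 := by simp [setYOne]

@[simp] lemma setYOne_X_one : setYOne (X 1 : MvPolynomial (Fin 2) R) = 1 := by simp [setYOne]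

lemma pderiv_one_scaleX (p : MvPolynomial (Fin 2) R) :
    pderiv 1 (scaleX p) = X 0 * scaleX (pderiv 0 p) + scaleX (pderiv 1 p) := by
  rw [scaleX, pderiv_aeval]
  simp [Fin.sum_univ_two, mul_comm]

lemma pderiv_zero_setYOne (p : MvPolynomial (Fin 2) R) :
    pderiv 0 (setYOne p) = setYOne (pderiv 0 p) := by
  rw [setYOne, pderiv_aeval]
  simp [Fin.sum_univ_two]

lemma setYOne_scaleX (p : MvPolynomial (Fin 2) R) : setYOne (scaleX p) = setYOne p := by
  rw [scaleX, comp_aeval_apply, setYOne]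
  congr 2 with i
  fin_cases i <;> simp

lemma eval_setYOne {f : Fin 2 → R} (hf : f 1 = 1) (p : MvPolynomial (Fin 2) R) :
    eval f (setYOne p) = eval f p := by
  change aeval f (setYOne p) = aeval f p
  rw [setYOne, comp_aeval_apply]
  congr 2 with i
  fin_cases i <;> simp [hf]

section Recurrence

variable {p q : MvPolynomial (Fin 2) R} {n : ℕ}
  (h : (1 - X 1) * q = (1 - X 0 * X 1 ^ (n + 1)) * p - X 1 * (1 - X 0) * scaleX p)
include h

lemma pderiv_one_of_recurrence :
    (1 - X 1) * pderiv 1 q - q =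
      (1 - X 0 * X 1 ^ (n + 1)) * pderiv 1 p - (n + 1 : MvPolynomial (Fin 2) R) * X 0 * X 1 ^ n * p
        - (1 - X 0) * scaleX p
        - X 1 * (1 - X 0) * (X 0 * scaleX (pderiv 0 p) + scaleX (pderiv 1 p)) := by
  have h' := congrArg (pderiv 1) h
  simp only [map_sub, pderiv_mul, pderiv_one, pderiv_pow, pderiv_X_self,
    pderiv_X_of_ne (by decide : (0 : Fin 2) ≠ 1), pderiv_one_scaleX] at h'
  push_cast at h'
  linear_combination h'

lemma setYOne_of_recurrence :
    setYOne q = ((n + 1 : MvPolynomial (Fin 2) R) * X 0 + 1 - X 0) * setYOne p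
      + X 0 * (1 - X 0) * setYOne (pderiv 0 p) := by
  have h' := congrArg setYOne (pderiv_one_of_recurrence h)
  simp only [map_sub, map_add, map_mul, map_pow, map_one, map_natCast, setYOne_X_zero,
    setYOne_X_one, setYOne_scaleX] at h'
  linear_combination -h'

lemma setYOne_pderiv_one_of_recurrence :
    2 * setYOne (pderiv 1 q) = (n * (n + 1) : MvPolynomial (Fin 2) R) * X 0 * setYOne p
      + 2 * (n + 1 : MvPolynomial (Fin 2) R) * X 0 * setYOne (pderiv 1 p)
      + (1 - X 0) * (2 * setYOne (pderiv 1 p) + 2 * X 0 * setYOne (pderiv 0 p)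
        + X 0 ^ 2 * setYOne (pderiv 0 (pderiv 0 p))
        + 2 * X 0 * setYOne (pderiv 0 (pderiv 1 p))) := by
  have h' := congrArg (fun r => setYOne (pderiv 1 r)) (pderiv_one_of_recurrence h)
  simp only [map_sub, map_add, map_mul, pderiv_mul, pderiv_one, pderiv_pow, pderiv_X_self,
    pderiv_X_of_ne (by decide : (0 : Fin 2) ≠ 1), pderiv_one_scaleX, Derivation.map_natCast,
    pderiv_pderiv_comm (1 : Fin 2) 0, map_pow, map_one, map_zero, map_natCast, setYOne_X_zero,
    setYOne_X_one, setYOne_scaleX] at h'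
  push_cast at h'
  linear_combination -h'

lemma setYOne_pderiv_one_succ_of_recurrence
    (hp : 2 * setYOne (pderiv 1 p) = (n : MvPolynomial (Fin 2) R) * X 0 * setYOne (pderiv 0 p)) :
    2 * setYOne (pderiv 1 q) = (n + 1 : MvPolynomial (Fin 2) R) * X 0 * setYOne (pderiv 0 q) := by
  have hq := congrArg (pderiv 0) (setYOne_of_recurrence h)
  have hp' := congrArg (pderiv 0) hp
  have h2 : pderiv 0 (2 : MvPolynomial (Fin 2) R) = 0 := by
    exact_mod_cast (pderiv 0).map_natCast 2
  simp only [map_add, map_sub, pderiv_mul, pderiv_zero_setYOne, Derivation.map_natCast, h2,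
    pderiv_X_self, pderiv_one] at hq hp'
  linear_combination setYOne_pderiv_one_of_recurrence h
    - (n + 1 : MvPolynomial (Fin 2) R) * X 0 * hq
    + ((n + 1 : MvPolynomial (Fin 2) R) * X 0 + 1 - X 0) * hp + (1 - X 0) * X 0 * hp'

end Recurrence

end DeformedEulerian

open DeformedEulerian in
/-- The deformed Eulerian polynomials satisfy `∂F_d/∂y (x,1) = (dx/2) ∂F_d/∂x (x,1)`. -/
theorem deformed_pde (F : ℕ → MvPolynomial (Fin 2) ℝ)
    (hF1 : F 1 = 1)
    (hFrec : ∀ d : ℕ, 2 ≤ d →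
      (1 - X 1) * F d =
        (1 - X 0 * X 1 ^ d) * F (d - 1) -
          X 1 * (1 - X 0) *
            (aeval (fun i : Fin 2 => if i = 0 then X 0 * X 1 else X 1) (F (d - 1))))
    (d : ℕ) (hd : 1 ≤ d) (x : ℝ) :
    eval (fun i : Fin 2 => if i = 0 then x else 1) (pderiv (1 : Fin 2) (F d)) =
      ((d : ℝ) * x / 2) *
        eval (fun i : Fin 2 => if i = 0 then x else 1) (pderiv (0 : Fin 2) (F d)) := by
  have hpoly : 2 * setYOne (pderiv 1 (F d)) =
      (d : MvPolynomial (Fin 2) ℝ) * X 0 * setYOne (pderiv 0 (F d)) := by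
    induction d, hd using Nat.le_induction with
    | base => simp [hF1]
    | succ n _ ih =>
      have h := hFrec (n + 1) (by omega)
      rw [Nat.add_sub_cancel] at h
      push_cast
      exact setYOne_pderiv_one_succ_of_recurrence h ih
  have hx := congrArg (eval fun i : Fin 2 => if i = 0 then x else 1) hpoly
  simp only [map_mul, map_ofNat, map_natCast, eval_X,
    eval_setYOne (f := fun i : Fin 2 => if i = 0 then x else 1) rfl, if_true] at hx
  linear_combination hx / 2
end

section
/- For every complex a ∉ [0,1], the integral ∫_0^1 log(u)/(u - a) du equals Li₂(1/a), where Li₂ is the analytic continuation of the dilogarithm to ℂ \ [1,∞). -/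
/-!
Integrate by parts against `log(1 - u/a)`, whose derivative is `1/(u - a)`. The boundary term
`log u · log(1 - u/a)` vanishes at `u = 1` because `log 1 = 0`, and at `u = 0` because it equals
`(u log u) · (log(1 - u/a)/u)` with the second factor bounded. What remains is
`-∫₀¹ log(1 - u/a)/u du = Li₂(1/a)`. For `a ∉ [0,1]` the point `1/a` avoids the cut `[1,∞)`,
so `log(1 - u/a)` is smooth on `[0,1]`.
-/

/-- The dilogarithm on `ℂ \ [1,∞)`, via `Li₂(z) = -∫₀^z log(1-u)/u du`
parametrized along the straight segment from `0` to `z`. -/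
noncomputable def dilogC (z : ℂ) : ℂ := -∫ t in (0:ℝ)..1, Complex.log (1 - z * t) / t

open Set intervalIntegral

theorem integral_log_smul_eq_sub_integral_dslope {E : Type*} [NormedAddCommGroup E]
    [NormedSpace ℝ E] [CompleteSpace E] {f f' : ℝ → E} {b : ℝ} (hb : 0 ≤ b)
    (hf : ∀ x ∈ Icc 0 b, HasDerivAt f (f' x) x) (hf' : ContinuousOn f' (Icc 0 b)) :
    ∫ x in 0..b, Real.log x • f' x = Real.log b • (f b - f 0) - ∫ x in 0..b, dslope f 0 x := by
  have hdslope : ContinuousOn (dslope f 0) (Icc 0 b) := by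
    intro x hx
    rcases eq_or_ne x 0 with rfl | hx0
    · exact (continuousAt_dslope_same.2 (hf 0 hx).differentiableAt).continuousWithinAt
    · exact (continuousWithinAt_dslope_of_ne hx0).2 (hf x hx).continuousAt.continuousWithinAt
  have hboundary : ∀ x, Real.log x • (f x - f 0) = (x * Real.log x) • dslope f 0 x := by
    intro x
    have := sub_smul_dslope f 0 x
    rw [sub_zero] at this
    rw [mul_comm, mul_smul, this]
  have hcont : ContinuousOn (fun x => Real.log x • (f x - f 0)) (Icc 0 b) := by
    simp_rw [hboundary]
    exact Real.continuous_mul_log.continuousOn.smul hdslope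
  have hderiv : ∀ x ∈ Ioo 0 b, HasDerivAt (fun x => Real.log x • (f x - f 0))
      (dslope f 0 x + Real.log x • f' x) x := by
    intro x hx
    refine ((Real.hasDerivAt_log hx.1.ne').smul
      ((hf x (Ioo_subset_Icc_self hx)).sub_const (f 0))).congr_deriv ?_
    rw [dslope_of_ne _ hx.1.ne', slope_def_module, sub_zero, add_comm]
  have hint_log : IntervalIntegrable (fun x => Real.log x • f' x) MeasureTheory.volume 0 b :=
    intervalIntegrable_log'.smul_continuousOn (by rwa [uIcc_of_le hb])
  have hint_dslope : IntervalIntegrable (dslope f 0) MeasureTheory.volume 0 b :=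
    (hdslope.mono (uIcc_of_le hb).subset).intervalIntegrable
  have hftc := integral_eq_sub_of_hasDerivAt_of_le hb hcont hderiv (hint_dslope.add hint_log)
  rw [integral_add hint_dslope hint_log, Real.log_zero, zero_smul, sub_zero] at hftc
  rw [← hftc, add_sub_cancel_left]

theorem one_sub_mul_ofReal_mem_slitPlane {z : ℂ} (hz : ∀ r : ℝ, 1 ≤ r → z ≠ r) {t : ℝ}
    (ht : t ∈ Icc 0 1) : 1 - z * t ∈ Complex.slitPlane := by
  rw [Complex.mem_slitPlane_iff]
  by_contra! h
  obtain ⟨hre, him⟩ := h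
  simp only [Complex.sub_re, Complex.one_re, Complex.mul_re, Complex.ofReal_re,
    Complex.ofReal_im, mul_zero, sub_zero, Complex.sub_im, Complex.one_im, Complex.mul_im,
    zero_sub, neg_eq_zero] at hre him
  have ht0 : 0 < t := by
    rcases ht.1.eq_or_lt with rfl | h
    · simp at hre; linarith
    · exact h
  have hzim : z.im = 0 := by simpa [ht0.ne'] using him
  refine hz z.re ?_ (Complex.ext rfl (by simpa using hzim))
  nlinarith [ht.2]

theorem dilogC_eq_integral_log_mul {z : ℂ} (hz : ∀ r : ℝ, 1 ≤ r → z ≠ r) :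
    dilogC z = ∫ u in (0:ℝ)..1, (Real.log u : ℂ) * (-z / (1 - z * u)) := by
  have hslit : ∀ t ∈ Icc (0:ℝ) 1, 1 - z * t ∈ Complex.slitPlane :=
    fun t ht => one_sub_mul_ofReal_mem_slitPlane hz ht
  have hderiv : ∀ t ∈ Icc (0:ℝ) 1,
      HasDerivAt (fun t : ℝ => Complex.log (1 - z * t)) (-z / (1 - z * t)) t := by
    intro t ht
    simpa using ((((hasDerivAt_id (t : ℂ)).const_mul z).const_sub 1).clog
      (hslit t ht)).comp_ofReal
  have hcont : ContinuousOn (fun t : ℝ => -z / (1 - z * t)) (Icc 0 1) :=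
    continuousOn_const.div (by fun_prop) fun t ht => Complex.slitPlane_ne_zero (hslit t ht)
  have hibp := integral_log_smul_eq_sub_integral_dslope zero_le_one hderiv hcont
  rw [Real.log_one, zero_smul, zero_sub] at hibp
  simp_rw [Complex.real_smul] at hibp
  rw [hibp, dilogC]
  congr 1
  refine integral_congr_ae (Filter.Eventually.of_forall fun t ht => ?_)
  rw [uIoc_of_le zero_le_one] at ht
  rw [dslope_of_ne _ ht.1.ne', slope_def_module]
  simp [div_eq_inv_mul]

theorem integral_log_div_sub_complex (a : ℂ) (ha : ∀ t : ℝ, t ∈ Set.Icc (0:ℝ) 1 → a ≠ t) :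
    ∫ u in (0:ℝ)..1, (Real.log u : ℂ) / (u - a) = dilogC (1 / a) := by
  have ha0 : a ≠ 0 := by simpa using ha 0 (left_mem_Icc.2 zero_le_one)
  have hcut : ∀ r : ℝ, 1 ≤ r → 1 / a ≠ r := fun r hr h =>
    ha r⁻¹ ⟨by positivity, inv_le_one_of_one_le₀ hr⟩
      (by rw [Complex.ofReal_inv, ← h, one_div, inv_inv])
  rw [dilogC_eq_integral_log_mul hcut]
  congr 1
  ext u
  have hden : 1 - 1 / a * (u : ℂ) = (a - u) / a := by field_simp
  rw [hden, div_div_eq_mul_div, neg_mul, one_div_mul_cancel ha0, neg_div, ← div_neg, neg_sub,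
    div_eq_mul_one_div]
end

section
/- Let P(x) = ∏_{j=1}^d (x - α_j) be a monic real polynomial of degree d ≥ 1 with P(0) = 1 and no zeros in [0,1]. Then ∫_0^∞ log(P(e^{-x})) dx = -∑_{j=1}^d Li₂(1/α_j). -/
open MeasureTheory Set Polynomial ComplexConjugate

theorem Complex.one_sub_div_mem_slitPlane {a : ℂ} {t : ℝ} (ht : 0 ≤ t)
    (ha : ∀ s ∈ Icc 0 t, (s : ℂ) ≠ a) : 1 - t / a ∈ slitPlane := by
  by_contra h
  obtain ⟨hre, him⟩ : (1 - t / a).re ≤ 0 ∧ (1 - t / a).im = 0 := by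
    simpa [Complex.mem_slitPlane_iff, not_or, not_lt] using h
  set r := ((t : ℂ) / a).re
  have hr : 1 ≤ r := by
    rw [Complex.sub_re, Complex.one_re] at hre
    linarith
  have hw : (t : ℂ) / a = r := Complex.ext rfl (by simpa using him)
  have ht0 : (t : ℂ) ≠ 0 := by
    rintro h0
    rw [h0, zero_div, eq_comm, Complex.ofReal_eq_zero] at hw
    linarith
  refine ha (t / r) ⟨by positivity, div_le_self ht hr⟩ ?_
  rw [Complex.ofReal_div, ← hw, div_div_cancel₀ ht0]

theorem intervalIntegrable_slope {E : Type*} [NormedAddCommGroup E] [NormedSpace ℝ E]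
    {f : ℝ → E} {a b : ℝ} {U : Set ℝ} (hU : IsOpen U) (hab : uIcc a b ⊆ U)
    (hf : DifferentiableOn ℝ f U) : IntervalIntegrable (slope f a) volume a b := by
  have ha : U ∈ nhds a := hU.mem_nhds (hab left_mem_uIcc)
  have hcont : ContinuousOn (dslope f a) U :=
    (continuousOn_dslope ha).2 ⟨hf.continuousOn, hf.differentiableAt ha⟩
  exact (hcont.mono hab).intervalIntegrable.congr_uIoo fun t ht =>
    dslope_of_ne f (fun h => by subst h; exact left_notMem_uIoo ht)

theorem intervalIntegrable_log_one_sub_mul_div {z : ℂ} {b : ℝ}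
    (hz : ∀ t ∈ uIcc 0 b, 1 - z * t ∈ Complex.slitPlane) :
    IntervalIntegrable (fun t : ℝ => Complex.log (1 - z * t) / t) volume 0 b := by
  have hU : IsOpen {t : ℝ | 1 - z * t ∈ Complex.slitPlane} :=
    Complex.isOpen_slitPlane.preimage (by fun_prop)
  have hf : DifferentiableOn ℝ (fun t : ℝ => Complex.log (1 - z * t))
      {t | 1 - z * t ∈ Complex.slitPlane} :=
    fun t ht => (((hasDerivAt_id (t : ℝ)).ofReal_comp.const_mul z).const_sub 1).clog_real ht
      |>.differentiableAt.differentiableWithinAt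
  convert intervalIntegrable_slope hU hz hf using 1
  ext t
  simp [slope_def_module, div_eq_inv_mul]

theorem integral_Ioi_comp_exp_neg {E : Type*} [NormedAddCommGroup E] [NormedSpace ℝ E]
    (f : ℝ → E) : ∫ x in Ioi 0, f (Real.exp (-x)) = ∫ t in (0:ℝ)..1, t⁻¹ • f t := by
  have himage : (fun x => Real.exp (-x)) '' Ioi 0 = Ioo 0 1 := by
    ext t
    constructor
    · rintro ⟨x, hx, rfl⟩
      exact ⟨Real.exp_pos _, Real.exp_lt_one_iff.mpr (neg_lt_zero.mpr hx)⟩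
    · intro ht
      exact ⟨-Real.log t, by simpa using Real.log_neg ht.1 ht.2, by simp [Real.exp_log ht.1]⟩
  have hderiv : ∀ x ∈ Ioi (0:ℝ),
      HasDerivWithinAt (fun x => Real.exp (-x)) (-Real.exp (-x)) (Ioi 0) x := fun x _ => by
    simpa using (hasDerivAt_neg x).exp.hasDerivWithinAt
  have hinj : InjOn (fun x => Real.exp (-x)) (Ioi 0) := fun a _ b _ h =>
    neg_injective (Real.exp_injective h)
  rw [intervalIntegral.integral_of_le zero_le_one, integral_Ioc_eq_integral_Ioo, ← himage,
    integral_image_eq_integral_abs_deriv_smul measurableSet_Ioi hderiv hinj]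
  refine setIntegral_congr_fun measurableSet_Ioi fun x _ => ?_
  rw [abs_neg, abs_of_pos (Real.exp_pos _), smul_smul, mul_inv_cancel₀ (Real.exp_pos _).ne',
    one_smul]

section RealPolynomial

variable {d : ℕ} {P : ℝ[X]} {α : Fin d → ℂ}

theorem ofReal_eval_eq_prod (hfact : P.map (algebraMap ℝ ℂ) = ∏ j, (X - C (α j))) (t : ℝ) :
    ((P.eval t : ℝ) : ℂ) = ∏ j, ((t : ℂ) - α j) := by
  rw [← Complex.coe_algebraMap, ← aeval_algebraMap_apply_eq_algebraMap_eval,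
    ← eval_map_algebraMap, hfact, eval_prod]
  simp only [eval_sub, eval_X, eval_C, Complex.coe_algebraMap]

theorem sum_comp_conj_eq_sum (hfact : P.map (algebraMap ℝ ℂ) = ∏ j, (X - C (α j)))
    {M : Type*} [AddCommMonoid M] (f : ℂ → M) : ∑ j, f (conj (α j)) = ∑ j, f (α j) := by
  have hroots (β : Fin d → ℂ) : (∏ j, (X - C (β j))).roots = Finset.univ.val.map β := by
    rw [Finset.prod_eq_multiset_prod]
    simpa only [Multiset.map_map, Function.comp_def] using
      roots_multiset_prod_X_sub_C (Finset.univ.val.map β)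
  have hconj : (P.map (algebraMap ℝ ℂ)).map (starRingEnd ℂ) = P.map (algebraMap ℝ ℂ) := by
    rw [Polynomial.map_map]
    congr 1
    ext r
    simp
  have hprod : ∏ j, (X - C (conj (α j))) = ∏ j, (X - C (α j)) := by
    rw [← hfact, ← hconj, hfact, Polynomial.map_prod]
    simp
  simpa only [hroots, Multiset.map_map, Function.comp_def, Finset.sum_eq_multiset_sum] using
    congrArg (fun p => ((roots p).map f).sum) hprod

theorem prod_neg_eq_one_of_eval_zero_eq_one (hfact : P.map (algebraMap ℝ ℂ) = ∏ j, (X - C (α j)))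
    (hP0 : P.eval 0 = 1) : ∏ j, -α j = 1 := by
  simpa [hP0] using (ofReal_eval_eq_prod hfact 0).symm

theorem ne_zero_of_eval_zero_eq_one (hfact : P.map (algebraMap ℝ ℂ) = ∏ j, (X - C (α j)))
    (hP0 : P.eval 0 = 1) (j : Fin d) : α j ≠ 0 := fun h =>
  one_ne_zero ((prod_neg_eq_one_of_eval_zero_eq_one hfact hP0).symm.trans
    (Finset.prod_eq_zero (Finset.mem_univ j) (neg_eq_zero.2 h)))

theorem ofReal_eval_eq_prod_one_sub_div (hfact : P.map (algebraMap ℝ ℂ) = ∏ j, (X - C (α j)))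
    (hP0 : P.eval 0 = 1) (t : ℝ) : ((P.eval t : ℝ) : ℂ) = ∏ j, (1 - t / α j) := by
  calc ((P.eval t : ℝ) : ℂ) = ∏ j, (-α j * (1 - t / α j)) := by
        rw [ofReal_eval_eq_prod hfact]
        refine Finset.prod_congr rfl fun j _ => ?_
        field_simp [ne_zero_of_eval_zero_eq_one hfact hP0 j]
        ring
    _ = ∏ j, (1 - t / α j) := by
        rw [Finset.prod_mul_distrib, prod_neg_eq_one_of_eval_zero_eq_one hfact hP0, one_mul]

theorem one_sub_div_mem_slitPlane_of_eval_ne_zero (hfact : P.map (algebraMap ℝ ℂ) = ∏ j, (X - C (α j)))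
    (hzero : ∀ t ∈ Icc (0:ℝ) 1, P.eval t ≠ 0) {t : ℝ} (ht : t ∈ Icc 0 1) (j : Fin d) :
    1 - t / α j ∈ Complex.slitPlane := by
  refine Complex.one_sub_div_mem_slitPlane ht.1 fun s hs hsj =>
    hzero s ⟨hs.1, hs.2.trans ht.2⟩ ?_
  exact_mod_cast (ofReal_eval_eq_prod hfact s).trans
    (Finset.prod_eq_zero (Finset.mem_univ j) (sub_eq_zero.2 hsj))

theorem ofReal_log_eval_eq_sum_log (hfact : P.map (algebraMap ℝ ℂ) = ∏ j, (X - C (α j)))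
    (hP0 : P.eval 0 = 1) (hzero : ∀ t ∈ Icc (0:ℝ) 1, P.eval t ≠ 0) {t : ℝ} (ht : t ∈ Icc 0 1) :
    (Real.log (P.eval t) : ℂ) = ∑ j, Complex.log (1 - t / α j) := by
  have hslit := one_sub_div_mem_slitPlane_of_eval_ne_zero hfact hzero ht
  have hreal : conj (∑ j, Complex.log (1 - t / α j)) = ∑ j, Complex.log (1 - t / α j) := by
    calc conj (∑ j, Complex.log (1 - t / α j))
        = ∑ j, Complex.log (1 - t / conj (α j)) := by
          rw [map_sum]
          refine Finset.sum_congr rfl fun j _ => ?_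
          rw [← Complex.log_conj _ (Complex.slitPlane_arg_ne_pi (hslit j))]
          simp
      _ = ∑ j, Complex.log (1 - t / α j) :=
          sum_comp_conj_eq_sum hfact fun a => Complex.log (1 - t / a)
  have hre : (∑ j, Complex.log (1 - t / α j)).re = Real.log (P.eval t) := by
    rw [Complex.re_sum, ← Real.log_abs, ← Real.norm_eq_abs, ← Complex.norm_real,
      ofReal_eval_eq_prod_one_sub_div hfact hP0, norm_prod,
      Real.log_prod fun j _ => norm_ne_zero_iff.2 (Complex.slitPlane_ne_zero (hslit j))]
    simp only [Complex.log_re]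
  rw [← hre]
  exact Complex.conj_eq_iff_re.1 hreal

end RealPolynomial

theorem integral_log_polynomial_general (d : ℕ) (P : Polynomial ℝ) (α : Fin d → ℂ)
    (hfact : Polynomial.map (algebraMap ℝ ℂ) P = ∏ j, (Polynomial.X - Polynomial.C (α j)))
    (hP0 : P.eval 0 = 1)
    (hzero : ∀ t ∈ Set.Icc (0:ℝ) 1, P.eval t ≠ 0) :
    ((∫ x in Set.Ioi (0:ℝ), Real.log (P.eval (Real.exp (-x)))) : ℂ) =
      -∑ j, dilogC (1 / α j) := by
  have hI : uIcc (0:ℝ) 1 = Icc 0 1 := uIcc_of_le zero_le_one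
  have hslit (j : Fin d) : ∀ t ∈ uIcc (0:ℝ) 1, 1 - 1 / α j * t ∈ Complex.slitPlane :=
    fun t ht => one_div_mul_eq_div (α j) (t : ℂ) ▸
      one_sub_div_mem_slitPlane_of_eval_ne_zero hfact hzero (hI ▸ ht) j
  calc ∫ x in Ioi (0:ℝ), ((Real.log (P.eval (Real.exp (-x))) : ℝ) : ℂ)
      = ∫ t in (0:ℝ)..1, t⁻¹ • ((Real.log (P.eval t) : ℝ) : ℂ) :=
        integral_Ioi_comp_exp_neg fun t => ((Real.log (P.eval t) : ℝ) : ℂ)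
    _ = ∫ t in (0:ℝ)..1, ∑ j, Complex.log (1 - 1 / α j * t) / t :=
        intervalIntegral.integral_congr fun t ht => by
          simp only [ofReal_log_eval_eq_sum_log hfact hP0 hzero (hI ▸ ht), one_div_mul_eq_div,
            Complex.real_smul, Finset.mul_sum, Complex.ofReal_inv, inv_mul_eq_div]
    _ = -∑ j, dilogC (1 / α j) := by
        rw [intervalIntegral.integral_finsetSum fun j _ =>
          intervalIntegrable_log_one_sub_mul_div (hslit j)]
        simp [dilogC]

/-- If `P(x) = ∏_{j=1}^d (x - α_j)` is a monic real polynomial of degree `d ≥ 1` with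
`P(0) = 1` and no zeros on `[0,1]`, then `∫₀^∞ log P(e^{-x}) dx = -∑_j Li₂(1/α_j)`. -/
theorem integral_log_polynomial (d : ℕ) (hd : 1 ≤ d) (P : Polynomial ℝ) (α : Fin d → ℂ)
    (hfact : Polynomial.map (algebraMap ℝ ℂ) P = ∏ j, (Polynomial.X - Polynomial.C (α j)))
    (hP0 : P.eval 0 = 1)
    (hzero : ∀ t ∈ Set.Icc (0:ℝ) 1, P.eval t ≠ 0) :
    ((∫ x in Set.Ioi (0:ℝ), Real.log (P.eval (Real.exp (-x)))) : ℂ) =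
      -∑ j, dilogC (1 / α j) :=
  integral_log_polynomial_general d P α hfact hP0 hzero
end
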